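/- For all n ≥ 1 and 1 ≤ i ≤ n, the number of permutations of [n] avoiding both 1324 and 1342 and starting with the letter i equals S_{n,i}. -/

import Mathlib

/-!
Deleting the first letter `p` of a permutation of `{0, …, m}` and standardising the rest is a
bijection onto pairs `(p, τ)` with `τ` a permutation of `{0, …, m - 1}`. The permutation avoids
{1324, 1342} iff `τ` does and `τ` has no occurrence of 213 or 231 among its letters `≥ p`:
such an occurrence preceded by `p` is a 1324 or a 1342.

So let `a(m, t)` count the {1324, 1342}-avoiders of length `m` without 213 or 231 among the
letters `≥ t`; those of length `m + 1` starting with `p` are counted by `a(m, p)`. Splitting by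
the first letter `q` once more: if `q ≤ t` the extra condition follows from avoidance, if
`t < q < m` it fails (`q` lies between the later letters `t` and `m`), and if `q = m` it is the
same condition on the rest. Hence `a(m + 1, t) = ∑_{q ≤ t} a(m, q) + a(m, t)` for `t < m`, whose
first difference is the Schröder recurrence; for `m ≤ t + 2` the condition is vacuous, which
gives the boundary values.
-/

/-- `π` contains the pattern `p` (given as the sequence of its values). -/
def ContainsPat {n k : ℕ} (π : Equiv.Perm (Fin n)) (p : Fin k → ℕ) : Prop :=
  ∃ f : Fin k → Fin n, StrictMono f ∧ ∀ a b : Fin k, p a < p b ↔ π (f a) < π (f b)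

/-- The first letter of `π` (in one-line notation, with values in `[n] = {1,…,n}`) is `i`. -/
def FirstIs {n : ℕ} (π : Equiv.Perm (Fin n)) (i : ℕ) : Prop :=
  ∀ j : Fin n, (j : ℕ) = 0 → (π j : ℕ) + 1 = i

open Equiv Finset

section

variable {m : ℕ}

def Contains1324Or1342 (σ : Perm (Fin m)) : Prop :=
  ∃ a b c d, a < b ∧ b < c ∧ c < d ∧ σ a < σ c ∧ σ a < σ d ∧
    (σ c < σ b ∧ σ b < σ d ∨ σ d < σ b ∧ σ b < σ c)

def Contains213Or231Above (σ : Perm (Fin m)) (t : ℕ) : Prop :=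
  ∃ b c d, b < c ∧ c < d ∧ t ≤ (σ c : ℕ) ∧ t ≤ (σ d : ℕ) ∧
    (σ c < σ b ∧ σ b < σ d ∨ σ d < σ b ∧ σ b < σ c)

lemma containsPat_four_iff (π : Perm (Fin m)) (p : Fin 4 → ℕ) :
    ContainsPat π p ↔ ∃ a b c d, a < b ∧ b < c ∧ c < d ∧
      ∀ i j, p i < p j ↔ π (![a, b, c, d] i) < π (![a, b, c, d] j) := by
  constructor
  · rintro ⟨f, hf, hp⟩
    have hf4 : ![f 0, f 1, f 2, f 3] = f := by ext i; fin_cases i <;> rfl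
    exact ⟨f 0, f 1, f 2, f 3, hf (by decide), hf (by decide), hf (by decide), hf4 ▸ hp⟩
  · rintro ⟨a, b, c, d, hab, hbc, hcd, hp⟩
    refine ⟨![a, b, c, d], Fin.strictMono_iff_lt_succ.mpr fun i ↦ ?_, hp⟩
    fin_cases i <;> assumption

lemma containsPat_1324_or_1342_iff (π : Perm (Fin m)) :
    ContainsPat π ![1, 3, 2, 4] ∨ ContainsPat π ![1, 3, 4, 2] ↔ Contains1324Or1342 π := by
  simp only [containsPat_four_iff, Contains1324Or1342, ← exists_or]
  refine exists₄_congr fun a b c d ↦ ?_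
  simp only [Fin.forall_fin_succ, IsEmpty.forall_iff, Matrix.cons_val_zero, Matrix.cons_val_succ,
    and_true]
  omega

noncomputable def permCons (p : Fin (m + 1)) (τ : Perm (Fin m)) : Perm (Fin (m + 1)) :=
  Equiv.ofBijective (Fin.cons p (p.succAbove ∘ τ) : Fin (m + 1) → Fin (m + 1))
    (Finite.injective_iff_bijective.mp <| Fin.cons_injective_iff.mpr
      ⟨by simp, Fin.succAbove_right_injective.comp τ.injective⟩)

@[simp] lemma permCons_zero (p : Fin (m + 1)) (τ : Perm (Fin m)) : permCons p τ 0 = p := rfl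

@[simp] lemma permCons_succ (p : Fin (m + 1)) (τ : Perm (Fin m)) (j : Fin m) :
    permCons p τ j.succ = p.succAbove (τ j) := rfl

lemma permCons_bijective :
    Function.Bijective (fun x : Fin (m + 1) × Perm (Fin m) ↦ permCons x.1 x.2) := by
  refine (Fintype.bijective_iff_injective_and_card _).mpr ⟨?_, ?_⟩
  · rintro ⟨p, τ⟩ ⟨p', τ'⟩ h
    obtain rfl : p = p' := by simpa using congr($h 0)
    exact Prod.ext rfl (Equiv.ext fun j ↦ Fin.succAbove_right_injective (p := p) <| by
      simpa using congr($h j.succ))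
  · simp [Fintype.card_perm, Nat.factorial_succ]

lemma card_subtype_perm_fin_succ (P : Perm (Fin (m + 1)) → Prop) :
    Nat.card {π // P π} =
      ∑ p : Fin (m + 1), Nat.card {τ : Perm (Fin m) // P (permCons p τ)} := by
  rw [← Nat.card_sigma,
    ← Nat.card_congr (subtypeProdEquivSigmaSubtype fun p τ ↦ P (permCons p τ))]
  exact Nat.card_congr
    ((Equiv.ofBijective _ permCons_bijective).subtypeEquiv fun _ ↦ Iff.rfl).symm

lemma Contains213Or231Above.mono {σ : Perm (Fin m)} {s t : ℕ} (h : Contains213Or231Above σ t)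
    (hst : s ≤ t) : Contains213Or231Above σ s := by
  obtain ⟨b, c, d, hbc, hcd, hc, hd, hb⟩ := h
  exact ⟨b, c, d, hbc, hcd, hst.trans hc, hst.trans hd, hb⟩

lemma not_contains213Or231Above_of_le {t : ℕ} (σ : Perm (Fin m)) (h : m ≤ t + 2) :
    ¬ Contains213Or231Above σ t := by
  rintro ⟨b, c, d, -, -, hc, hd, hb⟩
  omega

lemma contains1324Or1342_of_contains213Or231Above {t : ℕ} {σ : Perm (Fin (m + 1))}
    (h : Contains213Or231Above σ t) (h0 : (σ 0 : ℕ) ≤ t) : Contains1324Or1342 σ := by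
  obtain ⟨b, c, d, hbc, hcd, hc, hd, hb⟩ := h
  have hb0 : 0 < b := Fin.pos_of_ne_zero fun h ↦ by subst h; omega
  have hc0 : σ 0 ≠ σ c := σ.injective.ne (hb0.trans hbc).ne
  have hd0 : σ 0 ≠ σ d := σ.injective.ne (hb0.trans (hbc.trans hcd)).ne
  exact ⟨0, b, c, d, hb0, hbc, hcd, by omega, by omega, hb⟩

lemma contains213Or231Above_of_lt_of_lt_last {t : ℕ} {σ : Perm (Fin (m + 1))}
    (ht : t < σ 0) (hlast : σ 0 < Fin.last m) : Contains213Or231Above σ t := by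
  obtain ⟨c, hc⟩ := σ.surjective ⟨t, by omega⟩
  obtain ⟨d, hd⟩ := σ.surjective (Fin.last m)
  replace hc : (σ c : ℕ) = t := congrArg Fin.val hc
  replace hd : (σ d : ℕ) = m := congrArg Fin.val hd
  have hc0 : 0 < c := Fin.pos_of_ne_zero fun h ↦ by subst h; omega
  have hd0 : 0 < d := Fin.pos_of_ne_zero fun h ↦ by subst h; omega
  rcases lt_or_gt_of_ne (fun h : c = d ↦ by subst h; omega) with hcd | hdc
  · exact ⟨0, c, d, hc0, hcd, by omega, by omega, by omega⟩
  · exact ⟨0, d, c, hd0, hdc, by omega, by omega, by omega⟩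

lemma contains1324Or1342_permCons (p : Fin (m + 1)) (τ : Perm (Fin m)) :
    Contains1324Or1342 (permCons p τ) ↔
      Contains1324Or1342 τ ∨ Contains213Or231Above τ p := by
  simp only [Contains1324Or1342, Contains213Or231Above, Fin.exists_fin_succ, permCons_zero,
    permCons_succ, Fin.succ_lt_succ_iff, Fin.succAbove_lt_succAbove_iff, Fin.not_lt_zero,
    Fin.succ_pos, Fin.lt_succAbove_iff_le_castSucc, Fin.succAbove_lt_iff_castSucc_lt, Fin.le_def,
    Fin.val_castSucc, false_and, and_false, exists_false, false_or, true_and]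
  exact or_comm

lemma contains213Or231Above_permCons_last (τ : Perm (Fin m)) (t : ℕ) :
    Contains213Or231Above (permCons (Fin.last m) τ) t ↔ Contains213Or231Above τ t := by
  simp [Contains213Or231Above, Fin.exists_fin_succ, (Fin.le_last _).not_gt]

noncomputable def numAvoiding (m t : ℕ) : ℕ :=
  Nat.card {σ : Perm (Fin m) // ¬ Contains1324Or1342 σ ∧ ¬ Contains213Or231Above σ t}

lemma card_avoiding_apply_zero_eq (q : Fin (m + 1)) :
    Nat.card {π : Perm (Fin (m + 1)) // ¬ Contains1324Or1342 π ∧ π 0 = q} =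
      numAvoiding m q := by
  rw [card_subtype_perm_fin_succ, Finset.sum_eq_single q (fun p _ hpq ↦ by simp [hpq]) (by simp)]
  simp [numAvoiding, contains1324Or1342_permCons]

lemma numAvoiding_eq_of_le {t t' : ℕ} (h : m ≤ t + 2) (h' : m ≤ t' + 2) :
    numAvoiding m t = numAvoiding m t' := by
  simp [numAvoiding, not_contains213Or231Above_of_le _ h, not_contains213Or231Above_of_le _ h']

lemma numAvoiding_of_le_one {t : ℕ} (h : m ≤ 1) : numAvoiding m t = 1 := by
  have hall (σ : Perm (Fin m)) : ¬ Contains1324Or1342 σ ∧ ¬ Contains213Or231Above σ t :=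
    ⟨by rintro ⟨a, b, -, -, hab, -⟩; omega, not_contains213Or231Above_of_le σ (by omega)⟩
  rw [numAvoiding, Nat.card_congr (Equiv.subtypeUnivEquiv hall), Nat.card_perm, Nat.card_fin,
    Nat.factorial_eq_one.mpr h]

lemma numAvoiding_succ {t : ℕ} (ht : t < m) :
    numAvoiding (m + 1) t = ∑ q ∈ range (t + 1), numAvoiding m q + numAvoiding m t := by
  have hfirst (q : Fin m) : Nat.card {τ : Perm (Fin m) //
      ¬ Contains1324Or1342 (permCons q.castSucc τ) ∧
        ¬ Contains213Or231Above (permCons q.castSucc τ) t} =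
      if (q : ℕ) ≤ t then numAvoiding m q else 0 := by
    split_ifs with hq
    · refine Nat.card_congr (Equiv.subtypeEquivRight fun τ ↦ ?_)
      have hB (h : Contains213Or231Above (permCons q.castSucc τ) t) :
          Contains1324Or1342 (permCons q.castSucc τ) :=
        contains1324Or1342_of_contains213Or231Above h hq
      rw [and_iff_left_of_imp (mt hB), contains1324Or1342_permCons, not_or, Fin.val_castSucc]
    · have hB (τ : Perm (Fin m)) : Contains213Or231Above (permCons q.castSucc τ) t :=
        contains213Or231Above_of_lt_of_lt_last (not_le.mp hq) q.castSucc_lt_last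
      simp [hB]
  have hlast : Nat.card {τ : Perm (Fin m) //
      ¬ Contains1324Or1342 (permCons (Fin.last m) τ) ∧
        ¬ Contains213Or231Above (permCons (Fin.last m) τ) t} = numAvoiding m t := by
    refine Nat.card_congr (Equiv.subtypeEquivRight fun τ ↦ ?_)
    have hmono (h : Contains213Or231Above τ m) : Contains213Or231Above τ t := h.mono ht.le
    rw [contains1324Or1342_permCons, contains213Or231Above_permCons_last, Fin.val_last]
    tauto
  rw [numAvoiding, card_subtype_perm_fin_succ, Fin.sum_univ_castSucc, hlast]
  simp only [hfirst]
  rw [Fin.sum_univ_eq_sum_range (fun i ↦ if i ≤ t then numAvoiding m i else 0), ← sum_filter]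
  congr 2
  ext q
  simp only [mem_filter, mem_range]
  omega

lemma numAvoiding_succ_zero (hm : 0 < m) : numAvoiding (m + 1) 0 = 2 * numAvoiding m 0 := by
  rw [numAvoiding_succ hm, sum_range_one]
  ring

lemma numAvoiding_succ_succ {t : ℕ} (ht : t + 1 < m) :
    numAvoiding (m + 1) (t + 1) + numAvoiding m t =
      numAvoiding (m + 1) t + 2 * numAvoiding m (t + 1) := by
  rw [numAvoiding_succ ht, numAvoiding_succ (by omega), sum_range_succ _ (t + 1)]
  ring

lemma firstIs_iff (π : Perm (Fin (m + 1))) (i : ℕ) : FirstIs π i ↔ (π 0 : ℕ) + 1 = i :=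
  ⟨fun h ↦ h 0 rfl, fun h j hj ↦ by rwa [show j = 0 from Fin.ext hj]⟩

end

lemma numAvoiding_eq_of_schroeder (S : ℕ → ℕ → ℤ)
    (h11 : S 1 1 = 1) (h21 : S 2 1 = 1) (h22 : S 2 2 = 1)
    (h0 : ∀ n, S n 0 = 0)
    (hrec : ∀ n k, 1 ≤ k → k ≤ n - 2 →
      S n k = S n (k - 1) + 2 * S (n - 1) k - S (n - 1) (k - 1))
    (htop : ∀ n, 3 ≤ n → S n n = S n (n - 2) ∧ S n (n - 1) = S n (n - 2))
    (m q : ℕ) (hq : q ≤ m) : (numAvoiding m q : ℤ) = S (m + 1) (q + 1) := by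
  have hrec' (n k : ℕ) (hk : k + 2 ≤ n) :
      S (n + 1) (k + 1) = S (n + 1) k + 2 * S n (k + 1) - S n k := by
    simpa using hrec (n + 1) (k + 1) (by omega) (by omega)
  induction m generalizing q with
  | zero =>
    obtain rfl : q = 0 := by omega
    rw [numAvoiding_of_le_one zero_le_one, h11, Nat.cast_one]
  | succ k ih =>
    rcases Nat.eq_zero_or_pos k with rfl | hk
    · rw [numAvoiding_of_le_one le_rfl, Nat.cast_one]
      interval_cases q
      exacts [h21.symm, h22.symm]
    have hlow (q : ℕ) (hq : q < k) : (numAvoiding (k + 1) q : ℤ) = S (k + 2) (q + 1) := by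
      induction q with
      | zero =>
        rw [hrec' (k + 1) 0 (by omega), h0, h0, numAvoiding_succ_zero hk, Nat.cast_mul,
          ih 0 (by omega)]
        ring
      | succ t iht =>
        have hdiff := numAvoiding_succ_succ (m := k) (t := t) (by omega)
        zify at hdiff
        rw [hrec' (k + 1) (t + 1) (by omega), ← iht (by omega), ← ih t (by omega),
          ← ih (t + 1) (by omega)]
        linarith
    rcases lt_or_ge q k with hqk | hqk
    · exact hlow q hqk
    have hsat : (numAvoiding (k + 1) q : ℤ) = S (k + 2) k := by
      rw [numAvoiding_eq_of_le (t' := k - 1) (by omega) (by omega), hlow (k - 1) (by omega),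
        Nat.sub_add_cancel hk]
    obtain ⟨hlast, hpen⟩ := htop (k + 2) (by omega)
    simp only [show k + 2 - 2 = k by omega, show k + 2 - 1 = k + 1 by omega] at hlast hpen
    obtain rfl | rfl : q = k ∨ q = k + 1 := by omega
    exacts [hsat.trans hpen.symm, hsat.trans hlast.symm]

/-- The number of permutations of `[n]` avoiding the two patterns and starting with `i`
equals the Schröder triangle entry `S_{n,i}`. -/
theorem stmt_5 (S : ℕ → ℕ → ℤ)
    (h11 : S 1 1 = 1) (h21 : S 2 1 = 1) (h22 : S 2 2 = 1)
    (h0 : ∀ n, S n 0 = 0)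
    (hrec : ∀ n k, 1 ≤ k → k ≤ n - 2 →
      S n k = S n (k - 1) + 2 * S (n - 1) k - S (n - 1) (k - 1))
    (htop : ∀ n, 3 ≤ n → S n n = S n (n - 2) ∧ S n (n - 1) = S n (n - 2)) :
    ∀ n i, 1 ≤ n → 1 ≤ i → i ≤ n →
      (Nat.card {π : Equiv.Perm (Fin n) //
        ¬ ContainsPat π ![1, 3, 2, 4] ∧ ¬ ContainsPat π ![1, 3, 4, 2] ∧ FirstIs π i} : ℤ) = S n i := by
  intro n i _ hi hin
  obtain ⟨m, rfl⟩ : ∃ m, n = m + 1 := ⟨n - 1, by omega⟩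
  obtain ⟨q, rfl⟩ : ∃ q, i = q + 1 := ⟨i - 1, by omega⟩
  have hcard : Nat.card {π : Perm (Fin (m + 1)) //
      ¬ ContainsPat π ![1, 3, 2, 4] ∧ ¬ ContainsPat π ![1, 3, 4, 2] ∧ FirstIs π (q + 1)} =
      numAvoiding m q := by
    rw [← card_avoiding_apply_zero_eq ⟨q, by omega⟩]
    refine Nat.card_congr (Equiv.subtypeEquivRight fun π ↦ ?_)
    rw [firstIs_iff, ← containsPat_1324_or_1342_iff, not_or, and_assoc, Fin.ext_iff,
      add_left_inj]
  rw [hcard]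
  exact numAvoiding_eq_of_schroeder S h11 h21 h22 h0 hrec htop m q (by omega)
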